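/- With the setup of the rank-1 cofactor lemma, if in addition Φ is positively homogeneous of degree α, then the cofactors of y = F'(x) satisfy D_k^n = α · Φ(Δ) · Φ_k^n, i.e., the cofactor matrix of y equals α Φ(Δ) times the gradient matrix of Φ at Δ. -/

import Mathlib

attribute [local instance] Matrix.normedAddCommGroup Matrix.normedSpace

/-!
By the chain rule, `y` is the gradient of `x ↦ ⟨∂Φ(Δ), cof x⟩`, and for `3 × 3` matrices `cof`
is quadratic, so its derivative is its polarization. Once the rank-one gradient is written as
`a ⊗ b`, the identity `cof y = ⟨a ⊗ b, cof x⟩ • a ⊗ b` is polynomial in `x`, `a`, `b`, and Euler's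
relation `⟨∂Φ(Δ), Δ⟩ = α Φ(Δ)` identifies the scalar factor.
-/

namespace Matrix

def cofactor {R n : Type*} [CommRing R] [Fintype n] [DecidableEq n] (A : Matrix n n R) :
    Matrix n n R :=
  A.adjugateᵀ

theorem exists_eq_vecMulVec_of_mul_eq_mul {K m n : Type*} [Field K] (G : Matrix m n K)
    (h : ∀ i i' j j', G i j * G i' j' = G i' j * G i j') : ∃ a b, G = vecMulVec a b := by
  by_cases hG : G = 0
  · exact ⟨0, 0, by simp [hG]⟩
  obtain ⟨i, j, hij⟩ : ∃ i j, G i j ≠ 0 := by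
    by_contra! h0
    exact hG (ext h0)
  refine ⟨fun k => G k j / G i j, G i, ext fun k l => ?_⟩
  rw [vecMulVec_apply, div_mul_eq_mul_div, eq_div_iff hij, h k i l j, mul_comm]

theorem apply_eq_trace_mul {R m n : Type*} [CommSemiring R] [Fintype m] [Fintype n]
    [DecidableEq m] [DecidableEq n] (f : Matrix m n R →ₗ[R] R) (M : Matrix m n R) :
    f M = trace (M * of fun j i => f (single i j 1)) := by
  conv_lhs => rw [matrix_eq_sum_single M]
  simp only [map_sum, trace, diag, mul_apply, of_apply]
  refine Finset.sum_congr rfl fun i _ => Finset.sum_congr rfl fun j _ => ?_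
  rw [← smul_eq_mul, ← map_smul, smul_single, smul_eq_mul, mul_one]

section Calculus

variable {𝕜 m n : Type*} [NontriviallyNormedField 𝕜] [Fintype m] [Fintype n]

theorem differentiable_det [DecidableEq n] : Differentiable 𝕜 fun A : Matrix n n 𝕜 => A.det := by
  simp_rw [det_apply']
  fun_prop

theorem differentiable_updateRow [DecidableEq m] (j : m) (c : n → 𝕜) :
    Differentiable 𝕜 fun A : Matrix m n 𝕜 => A.updateRow j c := by
  refine differentiable_pi.2 fun p => differentiable_pi.2 fun q => ?_
  simp only [updateRow_apply]
  split_ifs <;> fun_prop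

theorem differentiable_cofactor [DecidableEq n] :
    Differentiable 𝕜 (cofactor : Matrix n n 𝕜 → Matrix n n 𝕜) := by
  refine differentiable_pi.2 fun i => differentiable_pi.2 fun j => ?_
  simp only [cofactor, transpose_apply, adjugate_apply]
  exact differentiable_det.comp (differentiable_updateRow i _)

end Calculus

theorem cofactor_add_smul_fin_three {R : Type*} [CommRing R] (x E : Matrix (Fin 3) (Fin 3) R)
    (t : R) :
    cofactor (x + t • E) =
      cofactor x + t • QuadraticMap.polar cofactor x E + t ^ 2 • cofactor E := by
  ext i j
  fin_cases i <;> fin_cases j <;>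
    simp [cofactor, QuadraticMap.polar, adjugate_fin_three] <;> ring

theorem fderiv_cofactor_fin_three {𝕜 : Type*} [NontriviallyNormedField 𝕜]
    (x E : Matrix (Fin 3) (Fin 3) 𝕜) :
    fderiv 𝕜 cofactor x E = QuadraticMap.polar cofactor x E := by
  have hd : DifferentiableAt 𝕜 cofactor x := differentiable_cofactor x
  refine hd.lineDeriv_eq_fderiv.symm.trans (HasLineDerivAt.lineDeriv ?_)
  have h := (((hasDerivAt_id (0 : 𝕜)).smul_const (QuadraticMap.polar cofactor x E)).const_add
    (cofactor x)).fun_add ((hasDerivAt_pow 2 (0 : 𝕜)).smul_const (cofactor E))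
  simpa [HasLineDerivAt, cofactor_add_smul_fin_three] using h

set_option maxHeartbeats 1000000 in
theorem cofactor_of_trace_polar_cofactor_mul_vecMulVec {R : Type*} [CommRing R]
    (x : Matrix (Fin 3) (Fin 3) R) (a b : Fin 3 → R) :
    cofactor (of fun k n => trace (QuadraticMap.polar cofactor x (single n k 1) * vecMulVec a b))
      = trace (cofactor x * vecMulVec a b) • vecMulVec a b := by
  ext i j
  fin_cases i <;> fin_cases j <;>
    simp [cofactor, QuadraticMap.polar, adjugate_fin_three, trace, mul_apply, Fin.sum_univ_three,
      vecMulVec_apply, single_apply] <;> ring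

end Matrix

theorem fderiv_apply_self_of_pos_homogeneous {E : Type*} [NormedAddCommGroup E]
    [NormedSpace ℝ E] {Φ : E → ℝ} {α : ℝ} {v : E} (hΦ : DifferentiableAt ℝ Φ v)
    (hhom : ∀ t : ℝ, 0 < t → Φ (t • v) = t ^ α * Φ v) :
    fderiv ℝ Φ v v = α * Φ v := by
  have hline : HasDerivAt (fun t : ℝ => Φ (t • v)) (fderiv ℝ Φ v v) 1 :=
    hΦ.hasFDerivAt.comp_hasDerivAt_of_eq 1 ((hasDerivAt_id (1 : ℝ)).smul_const v)
      (one_smul ℝ v).symm |>.congr_deriv (by simp)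
  have hpow : HasDerivAt (fun t : ℝ => t ^ α * Φ v) (α * Φ v) 1 := by
    simpa using (Real.hasDerivAt_rpow_const (x := 1) (p := α) (Or.inl one_ne_zero)).mul_const (Φ v)
  exact hline.unique <| hpow.congr_of_eventuallyEq <|
    (eventually_gt_nhds one_pos).mono fun t ht => hhom t ht

open Matrix

theorem rank_one_cofactor_homogeneous (α : ℝ)
    (Φ : Matrix (Fin 3) (Fin 3) ℝ → ℝ) (hΦ : ContDiff ℝ 1 Φ)
    (hhom : ∀ t : ℝ, 0 < t → ∀ M : Matrix (Fin 3) (Fin 3) ℝ, Φ (t • M) = t ^ α * Φ M)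
    (x Δ : Matrix (Fin 3) (Fin 3) ℝ) (hΔ : ∀ n k, Δ n k = x.adjugate k n)
    (G : Matrix (Fin 3) (Fin 3) ℝ)
    (hG : ∀ k n, G k n = fderiv ℝ Φ Δ (Matrix.single n k 1))
    (y : Matrix (Fin 3) (Fin 3) ℝ)
    (hy : ∀ k n, y k n =
      fderiv ℝ (fun z : Matrix (Fin 3) (Fin 3) ℝ => Φ (Matrix.of fun a b => z.adjugate b a))
        x (Matrix.single n k 1))
    (hrank : ∀ n k i j, G k n * G j i = G j n * G k i) :
    ∀ k n, y.adjugate n k = α * Φ Δ * G k n := by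
  have hΦd : Differentiable ℝ Φ := hΦ.differentiable one_ne_zero
  have hΔx : Δ = cofactor x := ext hΔ
  have hdΦ : ∀ M, fderiv ℝ Φ Δ M = trace (M * G) := fun M => by
    rw [show G = of fun k n => fderiv ℝ Φ Δ (single n k 1) from ext hG]
    exact apply_eq_trace_mul (fderiv ℝ Φ Δ).toLinearMap M
  have hchain : fderiv ℝ (fun z : Matrix (Fin 3) (Fin 3) ℝ => Φ (of fun a b => z.adjugate b a)) x
      = (fderiv ℝ Φ Δ).comp (fderiv ℝ cofactor x) :=
    hΔx ▸ fderiv_comp x (hΦd _) (differentiable_cofactor x)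
  have hy_polar : y = of fun k n => trace (QuadraticMap.polar cofactor x (single n k 1) * G) := by
    ext k n
    rw [of_apply, hy, hchain, ContinuousLinearMap.comp_apply, hdΦ, fderiv_cofactor_fin_three]
  have heuler : trace (Δ * G) = α * Φ Δ := by
    rw [← hdΦ]
    exact fderiv_apply_self_of_pos_homogeneous (hΦd Δ) fun t ht => hhom t ht Δ
  obtain ⟨a, b, rfl⟩ := exists_eq_vecMulVec_of_mul_eq_mul G fun i i' j j' => hrank j i j' i'
  intro k n
  change cofactor y k n = _
  rw [hy_polar, cofactor_of_trace_polar_cofactor_mul_vecMulVec, ← hΔx, heuler]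
  rfl
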